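/- arXiv:2402.10610 — 4 statements merged into one kernel-verified Lean document; each statement's English description precedes it below -/
import Mathlib

section
/- Let M be a finite family of nonempty clauses (each clause a finite set of literals) with a symmetric, irreflexive connection relation on literals. A path through M chooses one literal from each clause; a path is closed if it contains two connected literals, and M is spanning if every path is closed. If M is spanning and minimal (no proper subfamily of M is spanning), then M is fully connected: every literal occurring in some clause of M is connected to at least one literal occurring in a different clause of M. -/
/-- A path through the matrix `C` picks one literal from each clause. -/
def IsPath {L ι : Type} (C : ι → Finset L) (p : ι → L) : Prop := ∀ i, p i ∈ C i

/-- A path is closed if it contains two connected literals from distinct clauses. -/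
def Closed {L ι : Type} (conn : L → L → Prop) (p : ι → L) : Prop :=
  ∃ i j, i ≠ j ∧ conn (p i) (p j)

/-- A matrix is spanning if every path through it is closed. -/
def Spanning {L ι : Type} (conn : L → L → Prop) (C : ι → Finset L) : Prop :=
  ∀ p, IsPath C p → Closed conn p

theorem fully_connected (L ι : Type) [Fintype ι] (conn : L → L → Prop)
    (hsymm : ∀ a b, conn a b → conn b a) (hirr : ∀ a, ¬ conn a a)
    (C : ι → Finset L) (hne : ∀ i, (C i).Nonempty)
    (hspan : Spanning conn C)
    (hmin : ∀ s : Set ι, s ≠ Set.univ → ¬ Spanning conn (fun i : s => C i)) :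
    ∀ i : ι, ∀ l ∈ C i, ∃ j, j ≠ i ∧ ∃ k ∈ C j, conn l k := by
  classical
  intro i l hl
  set s : Set ι := {j | j ≠ i} with hs
  have hsne : s ≠ Set.univ := by
    intro h
    have : i ∈ s := h ▸ Set.mem_univ i
    exact this rfl
  have := hmin s hsne
  rw [Spanning] at this
  push_neg at this
  obtain ⟨p', hp', hnc⟩ := this
  set p : ι → L := fun j => if h : j = i then l else p' ⟨j, h⟩ with hp
  have hpath : IsPath C p := by
    intro j
    by_cases h : j = i
    · simp [hp, h, hl]
    · simpa [hp, h] using hp' ⟨j, h⟩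
  obtain ⟨a, b, hab, hc⟩ := hspan p hpath
  by_cases ha : a = i
  · subst ha
    have hb : b ≠ a := fun h => hab h.symm
    refine ⟨b, hb, p' ⟨b, hb⟩, hp' ⟨b, hb⟩, ?_⟩
    simpa [hp, hb] using hc
  · by_cases hb : b = i
    · subst hb
      refine ⟨a, ha, p' ⟨a, ha⟩, hp' ⟨a, ha⟩, ?_⟩
      exact hsymm _ _ (by simpa [hp, ha] using hc)
    · exfalso
      apply hnc
      refine ⟨⟨a, ha⟩, ⟨b, hb⟩, ?_, ?_⟩
      · intro h; exact hab (congrArg Subtype.val h)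
      · simpa [hp, ha, hb] using hc
end

section
/- Let M be a finite family of nonempty clauses with a connection relation, let C ∈ M, and suppose some literal L ∈ C is connected to no literal of any clause of M other than C. If M is spanning, then the subfamily M \ {C} is also spanning. -/
theorem drop_unconnected_clause (L ι : Type) [Fintype ι] (conn : L → L → Prop)
    (hsymm : ∀ a b, conn a b → conn b a)
    (C : ι → Finset L) (hne : ∀ i, (C i).Nonempty)
    (i₀ : ι) (l : L) (hl : l ∈ C i₀)
    (hnoconn : ∀ j, j ≠ i₀ → ∀ k ∈ C j, ¬ conn l k)
    (hspan : Spanning conn C) :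
    Spanning conn (fun j : {j : ι // j ≠ i₀} => C j.val) := by
  intro p hp
  classical
  set q : ι → L := fun i => if h : i = i₀ then l else p ⟨i, h⟩ with hq
  have hqpath : IsPath C q := by
    intro i
    by_cases h : i = i₀
    · simp [hq, h, hl]
    · simpa [hq, h] using hp ⟨i, h⟩
  obtain ⟨a, b, hab, hconn⟩ := hspan q hqpath
  have hqval : ∀ (i : ι) (h : i ≠ i₀), q i = p ⟨i, h⟩ := by
    intro i h; simp [hq, h]
  have ha : a ≠ i₀ := by
    intro h
    have hb : b ≠ i₀ := fun hb => hab (h.trans hb.symm)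
    exact hnoconn b hb (q b) (hqpath b) (by rw [show q a = l from by simp [hq, h]] at hconn; exact hconn)
  have hb : b ≠ i₀ := by
    intro h
    exact hnoconn a ha (q a) (hqpath a)
      (hsymm _ _ (by rw [show q b = l from by simp [hq, h]] at hconn; exact hconn))
  refine ⟨⟨a, ha⟩, ⟨b, hb⟩, ?_, ?_⟩
  · intro h; exact hab (congrArg Subtype.val h)
  · rw [← hqval a ha, ← hqval b hb]; exact hconn
end

section
/- A ground matrix is spanning if and only if the corresponding propositional CNF formula (the conjunction over clauses of the disjunction of their literals) is unsatisfiable, where a literal is a pair of a propositional atom and a polarity and two literals are connected iff they have the same atom and opposite polarities. -/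
/-- Ground connection: same atom, opposite polarity. -/
def GConn {A : Type} (l k : A × Bool) : Prop := l.1 = k.1 ∧ l.2 ≠ k.2

def SatClause {A : Type} (v : A → Bool) (Cl : Finset (A × Bool)) : Prop :=
  ∃ l ∈ Cl, v l.1 = l.2

theorem ground_spanning_iff_unsat (A ι : Type) [Fintype ι]
    (C : ι → Finset (A × Bool)) (hne : ∀ i, (C i).Nonempty) :
    Spanning GConn C ↔ ¬ ∃ v : A → Bool, ∀ i, SatClause v (C i) := by
  classical
  constructor
  · rintro hsp ⟨v, hv⟩
    choose p hp hvp using hv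
    obtain ⟨i, j, hij, h1, h2⟩ := hsp p hp
    apply h2
    rw [← hvp i, ← hvp j, h1]
  · intro hunsat p hp
    by_contra hcl
    apply hunsat
    refine ⟨fun a => decide (∃ i, p i = (a, true)), fun i => ⟨p i, hp i, ?_⟩⟩
    cases hb : (p i).2 with
    | true =>
      simp only [decide_eq_true_eq]
      exact ⟨i, by rw [← hb]⟩
    | false =>
      simp only [decide_eq_false_iff_not]
      rintro ⟨j, hj⟩
      apply hcl
      refine ⟨i, j, ?_, ?_, ?_⟩
      · rintro rfl
        rw [hj] at hb; simp at hb
      · rw [hj]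
      · rw [hj, hb]; simp
end

section
/- With literals as atom–polarity pairs over atoms A and connection meaning same atom with opposite polarity, any open path through a ground matrix M induces a valuation satisfying M: if a path p through M contains no two connected literals, then there exists v : A → Bool satisfying every clause of M. -/
theorem open_path_induces_model (A ι : Type) [Fintype ι]
    (C : ι → Finset (A × Bool)) (hne : ∀ i, (C i).Nonempty)
    (p : ι → A × Bool) (hp : IsPath C p)
    (hopen : ¬ ∃ i j, i ≠ j ∧ GConn (p i) (p j)) :
    ∃ v : A → Bool, ∀ i, SatClause v (C i) := by
  classical
  refine ⟨fun a => decide (∃ i, (p i).1 = a ∧ (p i).2 = true), fun i => ⟨p i, hp i, ?_⟩⟩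
  push_neg at hopen
  cases h : (p i).2 with
  | true => simp only [decide_eq_true_eq]; exact ⟨i, rfl, h⟩
  | false =>
    simp only [decide_eq_false_iff_not]
    rintro ⟨j, hj1, hj2⟩
    have hij : i ≠ j := fun e => by rw [e, hj2] at h; exact Bool.noConfusion h
    exact hopen i j hij ⟨hj1.symm, by rw [h, hj2]; exact Bool.noConfusion⟩
end
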